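/- arXiv:1507.08726 — 2 statements merged into one kernel-verified Lean document; each statement's English description precedes it below -/
import Mathlib

section
/- Let (x*, z*, b*) with b* > 0 be a fixed point of the RAMP update equations, meaning x* = η(x* + Aᵀ G(z*; b*); θ) and z* = Y − A x* + (1/δ)·G(z*; b*)·⟨∂₁η(x* + Aᵀ G(z*; b*); θ)⟩, where G(z;b) = (δ/ω)Φ(z;b). Then the vector x* satisfies the KKT condition of the ℓ₁-penalized M-estimation problem min_x Σᵢ ρ(Yᵢ − Aᵢᵀx) + λ‖x‖₁ with λ = θ·ω/(b*·δ): there exists v ∈ ∂‖x*‖₁ with Aᵀρ'(Y − A x*) = λ v. -/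
/-!
At a fixed point, the thresholding equation `x = η(x + t; θ)` with `t = Aᵀ G(z*)` forces
`|t_j| ≤ θ`, and `t_j = θ · sign x_j` on the support of `x`, so `v = t / θ` is a subgradient of
`‖·‖₁` at `x*`. The same equation shows that the Onsager average counts the support, hence equals
`ω`; the `z`-equation then collapses to `Prox z* = Y - A x*`. Thus `ρ'(Y - A x*) = ρ'(Prox z*)` is
proportional to `G(z*)`, and `Aᵀ ρ'(Y - A x*) = (ω / (b* δ)) · t = λ v`.
-/

/-- The soft thresholding function η(x,θ) = sign(x)·max(|x|-θ,0). -/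
noncomputable def eta (x θ : ℝ) : ℝ := Real.sign x * max (|x| - θ) 0

lemma Real.abs_sign_le_one (r : ℝ) : |Real.sign r| ≤ 1 := by
  rcases Real.sign_apply_eq r with h | h | h <;> simp [h]

lemma Real.sign_mul_abs (r : ℝ) : Real.sign r * |r| = r := by
  rcases lt_trichotomy r 0 with h | rfl | h
  · simp [Real.sign_of_neg h, abs_of_neg h]
  · simp
  · simp [Real.sign_of_pos h, abs_of_pos h]

section SoftThresholding

variable {s x t θ : ℝ}

lemma eta_eq_zero_of_abs_le (h : |s| ≤ θ) : eta s θ = 0 := by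
  simp [eta, max_eq_right (sub_nonpos.mpr h)]

lemma eta_eq_sub_of_le_abs (h : θ ≤ |s|) : eta s θ = s - θ * Real.sign s := by
  rw [eta, max_eq_left (sub_nonneg.mpr h), mul_sub, Real.sign_mul_abs]
  ring

lemma eta_ne_zero_iff (hθ : 0 ≤ θ) : eta s θ ≠ 0 ↔ θ < |s| := by
  refine ⟨fun h => not_le.mp fun hle => h (eta_eq_zero_of_abs_le hle), fun h => ?_⟩
  have hs : s ≠ 0 := abs_pos.mp (hθ.trans_lt h)
  rw [eta, max_eq_left (sub_nonneg.mpr h.le)]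
  exact mul_ne_zero (mt Real.sign_eq_zero_iff.mp hs) (sub_pos.mpr h).ne'

lemma sign_eta_of_lt_abs (h : θ < |s|) : Real.sign (eta s θ) = Real.sign s := by
  have hpos : 0 < |s| - θ := sub_pos.mpr h
  rw [eta, max_eq_left hpos.le]
  rcases lt_trichotomy s 0 with hs | rfl | hs
  · rw [Real.sign_of_neg hs, Real.sign_of_neg (by linarith)]
  · simp
  · rw [Real.sign_of_pos hs, Real.sign_of_pos (by linarith)]

lemma abs_le_of_eta_add_eq_self (hθ : 0 ≤ θ) (hfix : eta (x + t) θ = x) : |t| ≤ θ := by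
  rcases le_or_gt |x + t| θ with h | h
  · rw [eta_eq_zero_of_abs_le h] at hfix
    simpa [← hfix] using h
  · rw [eta_eq_sub_of_le_abs h.le] at hfix
    have ht : t = θ * Real.sign (x + t) := by linarith
    rw [ht, abs_mul, abs_of_nonneg hθ]
    exact mul_le_of_le_one_right hθ (Real.abs_sign_le_one _)

lemma eq_mul_sign_of_eta_add_eq_self (hθ : 0 ≤ θ) (hfix : eta (x + t) θ = x) (hx : x ≠ 0) :
    t = θ * Real.sign x := by
  have h : θ < |x + t| := (eta_ne_zero_iff hθ).mp (by rwa [hfix])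
  have hsign := sign_eta_of_lt_abs h
  rw [hfix] at hsign
  rw [eta_eq_sub_of_le_abs h.le] at hfix
  rw [hsign]
  linarith

lemma sum_indicator_lt_abs_eq_card {ι : Type*} [Fintype ι] {x t : ι → ℝ} (hθ : 0 ≤ θ)
    (hfix : ∀ j, eta (x j + t j) θ = x j) :
    ∑ j, (if θ < |x j + t j| then (1 : ℝ) else 0) = (Finset.univ.filter fun j => x j ≠ 0).card := by
  rw [Finset.sum_boole]
  congr 2
  exact Finset.filter_congr fun j _ => by rw [← eta_ne_zero_iff hθ, hfix]

end SoftThresholding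

theorem stmt_12_general (n p : ℕ)
    (A : Matrix (Fin n) (Fin p) ℝ) (Y : Fin n → ℝ)
    (ρ' : ℝ → ℝ)
    (Prox : ℝ → ℝ) (bstar : ℝ) (hb : 0 < bstar)
    (hProx : ∀ z : ℝ, z - Prox z = bstar * ρ' (Prox z))
    (δ ω θ : ℝ) (hδ : 0 < δ) (hω : 0 < ω) (hθ : 0 < θ)
    (xstar : Fin p → ℝ) (zstar : Fin n → ℝ)
    (G : ℝ → ℝ) (hG : ∀ z, G z = (δ / ω) * (bstar * ρ' (Prox z)))
    (hfix1 : ∀ j, xstar j =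
      eta (xstar j + (A.transpose.mulVec fun i => G (zstar i)) j) θ)
    (hfix2 : ∀ i, zstar i = Y i - A.mulVec xstar i
      + (1 / δ) * G (zstar i) *
        ((1 / p : ℝ) * ∑ j,
          (if θ < |xstar j + (A.transpose.mulVec fun i => G (zstar i)) j|
            then (1 : ℝ) else 0)))
    (hcard : (((Finset.univ.filter fun j => xstar j ≠ 0).card : ℝ) / p) = ω) :
    ∃ v : Fin p → ℝ, (∀ j, |v j| ≤ 1) ∧
      (∀ j, xstar j ≠ 0 → v j = Real.sign (xstar j)) ∧
      (A.transpose.mulVec fun i => ρ' (Y i - A.mulVec xstar i))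
        = fun j => (θ * ω / (bstar * δ)) * v j := by
  set t : Fin p → ℝ := A.transpose.mulVec fun i => G (zstar i) with ht
  have hfix j : eta (xstar j + t j) θ = xstar j := (hfix1 j).symm
  have honsager : (1 / p : ℝ) * ∑ j, (if θ < |xstar j + t j| then (1 : ℝ) else 0) = ω := by
    rw [sum_indicator_lt_abs_eq_card hθ.le hfix, ← hcard, one_div_mul_eq_div]
  have hresidual i : Prox (zstar i) = Y i - A.mulVec xstar i := by
    have h := hfix2 i
    rw [honsager, hG, ← hProx] at h
    field_simp at h
    linarith
  have hscore : (fun i => ρ' (Y i - A.mulVec xstar i)) = (ω / (δ * bstar)) • fun i => G (zstar i) := by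
    funext i
    rw [Pi.smul_apply, smul_eq_mul, ← hresidual, hG]
    field_simp
  refine ⟨fun j => t j / θ, fun j => ?_, fun j hx => ?_, ?_⟩
  · rw [abs_div, abs_of_pos hθ, div_le_one hθ]
    exact abs_le_of_eta_add_eq_self hθ.le (hfix j)
  · dsimp only
    rw [eq_mul_sign_of_eta_add_eq_self hθ.le (hfix j) hx]
    field_simp
  · rw [hscore, Matrix.mulVec_smul, ← ht]
    funext j
    rw [Pi.smul_apply, smul_eq_mul]
    field_simp

/-- A fixed point (x*, z*, b*) of the RAMP equations yields a solution of the KKT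
conditions of the ℓ₁-penalized M-estimation problem with λ = θ·ω/(b*·δ):
there is v ∈ ∂‖x*‖₁ with Aᵀ ρ'(Y - A x*) = λ v. Here G(z;b) = (δ/ω)·Φ(z;b),
Φ(z;b*) = b*·ρ'(Prox(z,b*)) with z - Prox z = Φ(z;b*), the Onsager term is the
average of ∂₁η over coordinates, which at a fixed point equals ‖x*‖₀/p = ω. -/
theorem stmt_12 (n p : ℕ) (hp : 0 < p)
    (A : Matrix (Fin n) (Fin p) ℝ) (Y : Fin n → ℝ)
    (ρ ρ' : ℝ → ℝ) (hρ : ConvexOn ℝ Set.univ ρ)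
    (hsub : ∀ u w : ℝ, ρ w ≥ ρ u + ρ' u * (w - u))
    (Prox : ℝ → ℝ) (bstar : ℝ) (hb : 0 < bstar)
    (hProx : ∀ z : ℝ, z - Prox z = bstar * ρ' (Prox z))
    (δ ω θ : ℝ) (hδ : 0 < δ) (hω : 0 < ω) (hθ : 0 < θ)
    (xstar : Fin p → ℝ) (zstar : Fin n → ℝ)
    (G : ℝ → ℝ) (hG : ∀ z, G z = (δ / ω) * (bstar * ρ' (Prox z)))
    (hfix1 : ∀ j, xstar j =
      eta (xstar j + (A.transpose.mulVec fun i => G (zstar i)) j) θ)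
    (hfix2 : ∀ i, zstar i = Y i - A.mulVec xstar i
      + (1 / δ) * G (zstar i) *
        ((1 / p : ℝ) * ∑ j,
          (if θ < |xstar j + (A.transpose.mulVec fun i => G (zstar i)) j|
            then (1 : ℝ) else 0)))
    (hcard : (((Finset.univ.filter fun j => xstar j ≠ 0).card : ℝ) / p) = ω) :
    ∃ v : Fin p → ℝ, (∀ j, |v j| ≤ 1) ∧
      (∀ j, xstar j ≠ 0 → v j = Real.sign (xstar j)) ∧
      (A.transpose.mulVec fun i => ρ' (Y i - A.mulVec xstar i))
        = fun j => (θ * ω / (bstar * δ)) * v j :=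
  stmt_12_general n p A Y ρ' Prox bstar hb hProx δ ω θ hδ hω hθ xstar zstar G hG hfix1 hfix2 hcard
end

section
/- Let Z be standard Gaussian and α > 0. Define ν₂(τ) = E_{x₀}[ x₀² · (Φ(α − x₀/τ) − Φ(−α − x₀/τ)) ] where Φ is the standard normal CDF and x₀ a real random variable with E x₀² < ∞. Then ν₂ is nondecreasing in τ > 0: its derivative equals E_{x₀}[ (x₀³/τ²)·(φ(α − x₀/τ) − φ(−α − x₀/τ)) ] and is nonnegative, since φ(α − μ) ≥ φ(−α − μ) for μ ≥ 0 and the reverse for μ ≤ 0, where φ is the standard normal density. -/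
open MeasureTheory

/-- Standard normal density. -/
noncomputable def stdphi (x : ℝ) : ℝ := (Real.sqrt (2 * Real.pi))⁻¹ * Real.exp (-x ^ 2 / 2)

/-- Standard normal CDF. -/
noncomputable def stdPhi (x : ℝ) : ℝ := ∫ t in Set.Iic x, stdphi t

lemma stdphi_nonneg (x : ℝ) : 0 ≤ stdphi x :=
  mul_nonneg (inv_nonneg.2 (Real.sqrt_nonneg _)) (Real.exp_pos _).le

lemma stdphi_continuous : Continuous stdphi :=
  continuous_const.mul (Real.continuous_exp.comp (by continuity))

lemma stdphi_integrable : Integrable stdphi := by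
  have h : Integrable (fun x : ℝ => Real.exp (-(1/2 : ℝ) * x ^ 2)) :=
    integrable_exp_neg_mul_sq (by norm_num)
  have : stdphi = fun x => (Real.sqrt (2 * Real.pi))⁻¹ * Real.exp (-(1/2 : ℝ) * x ^ 2) := by
    funext x; unfold stdphi; congr 1; ring
  rw [this]
  exact h.const_mul _

lemma stdphi_abs_mul_le (x : ℝ) : |x| * stdphi x ≤ (Real.sqrt (2 * Real.pi))⁻¹ := by
  have h1 : |x| ≤ Real.exp (x ^ 2 / 2) := by
    calc |x| ≤ 1 + x ^ 2 / 2 := by nlinarith [sq_abs x, sq_nonneg (|x| - 1)]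
    _ ≤ Real.exp (x ^ 2 / 2) := by
        have := Real.add_one_le_exp (x ^ 2 / 2); linarith
  have h2 : |x| * Real.exp (-x ^ 2 / 2) ≤ 1 := by
    rw [neg_div, Real.exp_neg]
    rw [mul_inv_le_iff₀ (Real.exp_pos _)]
    simpa using h1
  calc |x| * stdphi x = (Real.sqrt (2 * Real.pi))⁻¹ * (|x| * Real.exp (-x ^ 2 / 2)) := by
        unfold stdphi; ring
  _ ≤ (Real.sqrt (2 * Real.pi))⁻¹ * 1 :=
      mul_le_mul_of_nonneg_left h2 (inv_nonneg.2 (Real.sqrt_nonneg _))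
  _ = _ := mul_one _

lemma stdPhi_monotone : Monotone stdPhi := by
  intro a b hab
  apply setIntegral_mono_set stdphi_integrable.integrableOn
    (Filter.Eventually.of_forall stdphi_nonneg)
  exact Filter.Eventually.of_forall (Set.Iic_subset_Iic.2 hab)

lemma stdPhi_nonneg (x : ℝ) : 0 ≤ stdPhi x :=
  setIntegral_nonneg measurableSet_Iic (fun t _ => stdphi_nonneg t)

lemma stdPhi_le (x : ℝ) : stdPhi x ≤ ∫ t, stdphi t :=
  setIntegral_le_integral stdphi_integrable (Filter.Eventually.of_forall stdphi_nonneg)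

lemma stdPhi_hasDerivAt (y : ℝ) : HasDerivAt stdPhi (stdphi y) y := by
  have heq : ∀ x, stdPhi x = stdPhi 0 + ∫ t in (0:ℝ)..x, stdphi t := by
    intro x
    unfold stdPhi
    rw [← intervalIntegral.integral_Iic_sub_Iic stdphi_integrable.integrableOn
      stdphi_integrable.integrableOn]
    ring
  have h : HasDerivAt (fun x => stdPhi 0 + ∫ t in (0:ℝ)..x, stdphi t) (stdphi y) y := by
    apply HasDerivAt.const_add
    exact intervalIntegral.integral_hasDerivAt_right
      stdphi_integrable.intervalIntegrable
      (stdphi_continuous.stronglyMeasurable.stronglyMeasurableAtFilter)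
      stdphi_continuous.continuousAt
  exact h.congr_of_eventuallyEq (Filter.Eventually.of_forall heq)

lemma key_ineq (α : ℝ) (hα : 0 < α) (m : ℝ) :
    0 ≤ m * (stdphi (α - m) - stdphi (-α - m)) := by
  rcases le_total 0 m with hm | hm
  · apply mul_nonneg hm
    have : (α - m) ^ 2 ≤ (-α - m) ^ 2 := by nlinarith
    unfold stdphi
    have := Real.exp_le_exp.2 (by linarith : -(-α - m) ^ 2 / 2 ≤ -(α - m) ^ 2 / 2)
    nlinarith [inv_nonneg.2 (Real.sqrt_nonneg (2 * Real.pi))]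
  · have hsq : (-α - m) ^ 2 ≤ (α - m) ^ 2 := by nlinarith
    have hD : stdphi (α - m) - stdphi (-α - m) ≤ 0 := by
      unfold stdphi
      have := Real.exp_le_exp.2 (by linarith : -(α - m) ^ 2 / 2 ≤ -(-α - m) ^ 2 / 2)
      nlinarith [inv_nonneg.2 (Real.sqrt_nonneg (2 * Real.pi))]
    nlinarith [mul_nonneg (neg_nonneg.2 hm) (neg_nonneg.2 hD)]

/-- The function ν₂(τ) = E[x₀²·(Φ(α - x₀/τ) - Φ(-α - x₀/τ))] is nondecreasing on τ > 0:
its derivative is E[(x₀³/τ²)·(φ(α - x₀/τ) - φ(-α - x₀/τ))] ≥ 0, using the pointwise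
inequality μ·(φ(α-μ) - φ(-α-μ)) ≥ 0. -/
theorem stmt_16 (α : ℝ) (hα : 0 < α) (μ : Measure ℝ) [IsProbabilityMeasure μ]
    (hsq : Integrable (fun x => x ^ 2) μ) :
    (∀ m : ℝ, 0 ≤ m * (stdphi (α - m) - stdphi (-α - m))) ∧
    MonotoneOn (fun τ => ∫ x, x ^ 2 * (stdPhi (α - x / τ) - stdPhi (-α - x / τ)) ∂μ)
      (Set.Ioi (0 : ℝ)) ∧
    ∀ τ ∈ Set.Ioi (0 : ℝ),
      HasDerivAt (fun τ => ∫ x, x ^ 2 * (stdPhi (α - x / τ) - stdPhi (-α - x / τ)) ∂μ)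
        (∫ x, (x ^ 3 / τ ^ 2) * (stdphi (α - x / τ) - stdphi (-α - x / τ)) ∂μ) τ ∧
      0 ≤ ∫ x, (x ^ 3 / τ ^ 2) * (stdphi (α - x / τ) - stdphi (-α - x / τ)) ∂μ := by
  set C := ∫ t, stdphi t with hC
  have hC0 : 0 ≤ C := integral_nonneg stdphi_nonneg
  have hPhiMeas : Measurable stdPhi := stdPhi_monotone.measurable
  -- measurability of the integrand for each τ
  have hFmeas : ∀ τ : ℝ, AEStronglyMeasurable
      (fun x => x ^ 2 * (stdPhi (α - x / τ) - stdPhi (-α - x / τ))) μ := by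
    intro τ
    exact ((measurable_id.pow_const 2).mul
      ((hPhiMeas.comp (by fun_prop)).sub (hPhiMeas.comp (by fun_prop)))).aestronglyMeasurable
  -- integrability of F τ
  have hFint : ∀ τ : ℝ, Integrable
      (fun x => x ^ 2 * (stdPhi (α - x / τ) - stdPhi (-α - x / τ))) μ := by
    intro τ
    apply Integrable.mono' (hsq.const_mul (2 * C)) (hFmeas τ)
    refine Filter.Eventually.of_forall fun x => ?_
    rw [norm_mul, Real.norm_eq_abs, Real.norm_eq_abs, abs_pow, sq_abs]
    have h1 := stdPhi_nonneg (α - x / τ)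
    have h2 := stdPhi_nonneg (-α - x / τ)
    have h3 := stdPhi_le (α - x / τ)
    have h4 := stdPhi_le (-α - x / τ)
    have : |stdPhi (α - x / τ) - stdPhi (-α - x / τ)| ≤ 2 * C :=
      abs_le.2 ⟨by linarith, by linarith⟩
    nlinarith [sq_nonneg x]
  -- the derivative claim
  have hderiv : ∀ τ : ℝ, 0 < τ →
      HasDerivAt (fun τ => ∫ x, x ^ 2 * (stdPhi (α - x / τ) - stdPhi (-α - x / τ)) ∂μ)
        (∫ x, (x ^ 3 / τ ^ 2) * (stdphi (α - x / τ) - stdphi (-α - x / τ)) ∂μ) τ := by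
    intro τ hτ
    set F' : ℝ → ℝ → ℝ := fun t x => (x ^ 3 / t ^ 2) * (stdphi (α - x / t) - stdphi (-α - x / t))
      with hF'
    have hball : ∀ t ∈ Metric.ball τ (τ / 2), τ / 2 < t := by
      intro t ht
      rw [Metric.mem_ball, Real.dist_eq, abs_lt] at ht
      linarith [ht.1]
    have h := hasDerivAt_integral_of_dominated_loc_of_deriv_le (F := fun t x =>
        x ^ 2 * (stdPhi (α - x / t) - stdPhi (-α - x / t))) (F' := F')
        (bound := fun x => x ^ 2 * (4 * (Real.sqrt (2 * Real.pi))⁻¹ * (α + 1) / τ))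
        (Metric.ball_mem_nhds τ (half_pos hτ))
        (Filter.Eventually.of_forall fun t => hFmeas t) (hFint τ)
        ?_ ?_ ?_ ?_
    · exact h.2
    · -- measurability of F' τ
      apply Continuous.aestronglyMeasurable
      apply Continuous.mul (by fun_prop)
      exact (stdphi_continuous.comp (by fun_prop)).sub (stdphi_continuous.comp (by fun_prop))
    · -- bound
      refine Filter.Eventually.of_forall fun x => fun t ht => ?_
      have htpos : 0 < t := lt_trans (half_pos hτ) (hball t ht)
      have key : ∀ y : ℝ, |x/t| ≤ α + |y| → |x/t| * stdphi y ≤ α * (Real.sqrt (2*Real.pi))⁻¹ + (Real.sqrt (2*Real.pi))⁻¹ := by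
        intro y hy
        have h1 : |x/t| * stdphi y ≤ (α + |y|) * stdphi y :=
          mul_le_mul_of_nonneg_right hy (stdphi_nonneg y)
        have h2 : |y| * stdphi y ≤ (Real.sqrt (2*Real.pi))⁻¹ := stdphi_abs_mul_le y
        have h3 : stdphi y ≤ (Real.sqrt (2*Real.pi))⁻¹ := by
          have he : Real.exp (-y ^ 2 / 2) ≤ 1 := Real.exp_le_one_iff.2 (by nlinarith [sq_nonneg y])
          have : stdphi y ≤ (Real.sqrt (2*Real.pi))⁻¹ * 1 := by
            unfold stdphi
            exact mul_le_mul_of_nonneg_left he (inv_nonneg.2 (Real.sqrt_nonneg _))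
          simpa using this
        nlinarith [stdphi_nonneg y, mul_le_mul_of_nonneg_left h3 hα.le]
      have k1 : |x/t| ≤ α + |α - x/t| := by
        have h := abs_add_le (α - x/t) (-α)
        rw [show α - x/t + -α = -(x/t) by ring, abs_neg, abs_neg, abs_of_pos hα] at h
        linarith
      have k2 : |x/t| ≤ α + |(-α - x/t)| := by
        have h := abs_add_le (-α - x/t) α
        rw [show -α - x/t + α = -(x/t) by ring, abs_neg, abs_of_pos hα] at h
        linarith
      have b1 := key (α - x/t) k1
      have b2 := key (-α - x/t) k2
      -- now assemble
      have hx3 : |(x:ℝ) ^ 3 / t ^ 2| = x ^ 2 * (|x/t| * (1/t)) := by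
        rw [abs_div, abs_pow, abs_pow, abs_div, abs_of_pos htpos]
        rw [show |x| ^ 3 = x ^ 2 * |x| by rw [pow_succ, sq_abs]]
        field_simp
      rw [hF']
      simp only [Real.norm_eq_abs, abs_mul]
      rw [hx3]
      have habs : |stdphi (α - x/t) - stdphi (-α - x/t)| ≤ stdphi (α - x/t) + stdphi (-α - x/t) := by
        have := abs_sub (stdphi (α - x/t)) (stdphi (-α - x/t))
        calc |stdphi (α - x/t) - stdphi (-α - x/t)| ≤ |stdphi (α - x/t)| + |stdphi (-α - x/t)| := abs_sub _ _
        _ = stdphi (α - x/t) + stdphi (-α - x/t) := by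
            rw [abs_of_nonneg (stdphi_nonneg _), abs_of_nonneg (stdphi_nonneg _)]
      have hinv : (1:ℝ)/t ≤ 2/τ := by
        rw [div_le_div_iff₀ htpos hτ]
        linarith [hball t ht]
      calc x ^ 2 * (|x/t| * (1/t)) * |stdphi (α - x/t) - stdphi (-α - x/t)|
          ≤ x ^ 2 * (|x/t| * (1/t)) * (stdphi (α - x/t) + stdphi (-α - x/t)) := by
            apply mul_le_mul_of_nonneg_left habs
            positivity
      _ = x ^ 2 * ((|x/t| * stdphi (α - x/t) + |x/t| * stdphi (-α - x/t)) * (1/t)) := by ring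
      _ ≤ x ^ 2 * ((2 * (α * (Real.sqrt (2*Real.pi))⁻¹ + (Real.sqrt (2*Real.pi))⁻¹)) * (2/τ)) := by
            apply mul_le_mul_of_nonneg_left _ (sq_nonneg x)
            apply mul_le_mul (by linarith) hinv (by positivity)
            positivity
      _ = x ^ 2 * (4 * (Real.sqrt (2 * Real.pi))⁻¹ * (α + 1) / τ) := by ring
    · exact (hsq.const_mul (4 * (Real.sqrt (2 * Real.pi))⁻¹ * (α + 1) / τ)).congr
        (Filter.Eventually.of_forall fun x => by ring)
    · -- differentiability
      refine Filter.Eventually.of_forall fun x => fun t ht => ?_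
      have htpos : 0 < t := lt_trans (half_pos hτ) (hball t ht)
      have htne : t ≠ 0 := htpos.ne'
      have hinner : HasDerivAt (fun s : ℝ => x / s) (-(x / t ^ 2)) t := by
        simpa [div_eq_mul_inv, mul_neg] using (hasDerivAt_inv htne).const_mul x
      have h1 : HasDerivAt (fun s : ℝ => α - x / s) (x / t ^ 2) t := by
        simpa using (hinner.const_sub α)
      have h2 : HasDerivAt (fun s : ℝ => -α - x / s) (x / t ^ 2) t := by
        simpa using (hinner.const_sub (-α))
      have hc1 := (stdPhi_hasDerivAt (α - x / t)).comp t h1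
      have hc2 := (stdPhi_hasDerivAt (-α - x / t)).comp t h2
      have := ((hc1.sub hc2).const_mul (x ^ 2))
      convert this using 1
      · rfl
      · rfl
      rw [hF']
      field_simp
  refine ⟨key_ineq α hα, ?_, fun τ hτ => ?_⟩
  · -- monotonicity
    have hd : ∀ τ ∈ Set.Ioi (0:ℝ), 0 ≤ deriv
        (fun τ => ∫ x, x ^ 2 * (stdPhi (α - x / τ) - stdPhi (-α - x / τ)) ∂μ) τ := by
      intro τ hτ
      have hτ'' : (0:ℝ) < τ := hτ
      rw [(hderiv τ hτ).deriv]
      apply integral_nonneg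
      intro x
      have h1 := key_ineq α hα (x / τ)
      have heq : x ^ 3 / τ ^ 2 * (stdphi (α - x / τ) - stdphi (-α - x / τ))
          = (x ^ 2 / τ) * ((x / τ) * (stdphi (α - x / τ) - stdphi (-α - x / τ))) := by
        field_simp
      simp only [Pi.zero_apply]
      rw [heq]
      exact mul_nonneg (by positivity) h1
    apply monotoneOn_of_deriv_nonneg (convex_Ioi 0)
    · intro τ hτ
      exact ((hderiv τ hτ).differentiableAt.continuousAt).continuousWithinAt
    · rw [interior_Ioi]
      exact fun τ hτ => (hderiv τ hτ).differentiableAt.differentiableWithinAt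
    · rw [interior_Ioi]; exact hd
  · refine ⟨hderiv τ hτ, ?_⟩
    apply integral_nonneg
    intro x
    have h1 := key_ineq α hα (x / τ)
    have hτ' : (0:ℝ) < τ := hτ
    have heq : x ^ 3 / τ ^ 2 * (stdphi (α - x / τ) - stdphi (-α - x / τ))
        = (x ^ 2 / τ) * ((x / τ) * (stdphi (α - x / τ) - stdphi (-α - x / τ))) := by
      field_simp
    simp only [Pi.zero_apply]
    rw [heq]
    exact mul_nonneg (by positivity) h1
end
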